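/- arXiv:1805.07943 — 2 statements merged into one kernel-verified Lean document; each statement's English description precedes it below -/
import Mathlib

section
/- Let g : ℝ^d → ℝ be measurable, let p ≥ 1 be an integer, and suppose sup_{x∈ℝ^d} |x_j^(2p) g(x)| ≤ B for each coordinate j = 1,…,d. Then for every ε ∈ (0,1], ∫_{‖x‖ ≥ ε} g(x)² dx ≤ C · B² · ε^(−8p) for a constant C depending only on d and p, provided 2p > d. -/
/-!
Choosing a coordinate `j` with `x_j²` maximal gives `‖x‖^(2p) ≤ d^p x_j^(2p)`, hence
`g(x)² ‖x‖^(4p) ≤ d^(2p) B²`. For `0 < ε ≤ 1` and `‖x‖ ≥ ε` one has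
`ε^(8p) (1 + ‖x‖)^(4p) ≤ 2^(4p) ‖x‖^(4p)`, so on `{‖x‖ ≥ ε}` the function `g²` is dominated by
`d^(2p) 2^(4p) B² ε^(-8p) (1 + ‖x‖)^(-4p)`, which is integrable over `ℝ^d` because `4p > d`.
-/

open MeasureTheory

lemma sq_mul_one_add_le_two_mul {ε r : ℝ} (hε0 : 0 ≤ ε) (hε1 : ε ≤ 1) (hr : ε ≤ r) :
    ε ^ 2 * (1 + r) ≤ 2 * r := by
  rcases le_total r 1 with h | h
  · nlinarith [mul_le_mul hε1 hr hε0 zero_le_one]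
  · nlinarith [pow_le_one₀ hε0 hε1 (n := 2)]

lemma pow_mul_one_add_pow_le {ε r : ℝ} (hε0 : 0 ≤ ε) (hε1 : ε ≤ 1) (hr : ε ≤ r) (n : ℕ) :
    ε ^ (2 * n) * (1 + r) ^ n ≤ 2 ^ n * r ^ n := by
  rw [pow_mul, ← mul_pow, ← mul_pow]
  exact pow_le_pow_left₀ (mul_nonneg (by positivity) (by linarith))
    (sq_mul_one_add_le_two_mul hε0 hε1 hr) n

lemma integrable_inv_one_add_norm_pow {E : Type*} [NormedAddCommGroup E] [NormedSpace ℝ E]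
    [FiniteDimensional ℝ E] [MeasurableSpace E] [BorelSpace E] {μ : Measure E}
    [μ.IsAddHaarMeasure] {n : ℕ} (hn : Module.finrank ℝ E < n) :
    Integrable (fun x : E ↦ ((1 + ‖x‖) ^ n)⁻¹) μ := by
  refine (integrable_one_add_norm (μ := μ) (r := n) (by exact_mod_cast hn)).congr
    (.of_forall fun x ↦ ?_)
  simp only [Real.rpow_neg (by positivity : (0 : ℝ) ≤ 1 + ‖x‖), Real.rpow_natCast]

lemma setIntegral_le_mul_integral_of_le {α : Type*} [MeasurableSpace α] {μ : Measure α}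
    {f w : α → ℝ} {S : Set α} {K : ℝ} (hS : MeasurableSet S) (hf : 0 ≤ f) (hw : Integrable w μ)
    (hw0 : 0 ≤ w) (hK : 0 ≤ K) (h : ∀ x ∈ S, f x ≤ K * w x) :
    ∫ x in S, f x ∂μ ≤ K * ∫ x, w x ∂μ := calc
  ∫ x in S, f x ∂μ ≤ ∫ x in S, K * w x ∂μ :=
    integral_mono_of_nonneg (.of_forall hf) (hw.const_mul K).integrableOn
      ((ae_restrict_iff' hS).2 (.of_forall h))
  _ = K * ∫ x in S, w x ∂μ := integral_const_mul K _
  _ ≤ K * ∫ x, w x ∂μ :=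
    mul_le_mul_of_nonneg_left (setIntegral_le_integral hw (.of_forall hw0)) hK

namespace EuclideanSpace

variable {ι : Type*} [Fintype ι]

lemma exists_norm_sq_le_card_mul_sq [Nonempty ι] (x : EuclideanSpace ℝ ι) :
    ∃ j, ‖x‖ ^ 2 ≤ Fintype.card ι * x j ^ 2 := by
  obtain ⟨j, hj⟩ := Finite.exists_max fun i ↦ x i ^ 2
  refine ⟨j, ?_⟩
  rw [norm_sq_eq]
  simpa [Real.norm_eq_abs, sq_abs] using Finset.sum_le_card_nsmul Finset.univ _ _ fun i _ ↦ hj i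

variable {g : EuclideanSpace ℝ ι → ℝ} {B : ℝ} {n : ℕ}

lemma abs_mul_norm_pow_le [Nonempty ι] (hB : ∀ j x, |x j ^ (2 * n) * g x| ≤ B)
    (x : EuclideanSpace ℝ ι) : |g x| * ‖x‖ ^ (2 * n) ≤ Fintype.card ι ^ n * B := by
  obtain ⟨j, hj⟩ := exists_norm_sq_le_card_mul_sq x
  calc |g x| * ‖x‖ ^ (2 * n) = |g x| * (‖x‖ ^ 2) ^ n := by rw [pow_mul]
    _ ≤ |g x| * (Fintype.card ι * x j ^ 2) ^ n := by gcongr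
    _ = Fintype.card ι ^ n * |x j ^ (2 * n) * g x| := by
      rw [abs_mul, abs_of_nonneg ((even_two_mul n).pow_nonneg (x j)), pow_mul]; ring
    _ ≤ Fintype.card ι ^ n * B := by gcongr; exact hB j x

lemma sq_le_mul_inv_one_add_norm_pow (hB : ∀ j x, |x j ^ (2 * n) * g x| ≤ B) {ε : ℝ}
    (hε0 : 0 < ε) (hε1 : ε ≤ 1) {x : EuclideanSpace ℝ ι} (hx : ε ≤ ‖x‖) :
    g x ^ 2 ≤ Fintype.card ι ^ (2 * n) * 2 ^ (4 * n) * B ^ 2 / ε ^ (8 * n) *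
      ((1 + ‖x‖) ^ (4 * n))⁻¹ := by
  have hx0 : 0 < ‖x‖ := hε0.trans_le hx
  have : Nonempty ι := by
    by_contra h
    rw [not_nonempty_iff] at h
    simp [Subsingleton.elim x 0] at hx0
  have hdecay := abs_mul_norm_pow_le hB x
  have hweight : ε ^ (8 * n) * (1 + ‖x‖) ^ (4 * n) ≤ 2 ^ (4 * n) * ‖x‖ ^ (4 * n) := by
    simpa only [← mul_assoc, show 2 * 4 = 8 by rfl] using
      pow_mul_one_add_pow_le hε0.le hε1 hx (4 * n)
  rw [div_mul_eq_mul_div, ← div_eq_mul_inv, div_div, le_div_iff₀ (by positivity)]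
  calc g x ^ 2 * ((1 + ‖x‖) ^ (4 * n) * ε ^ (8 * n))
      ≤ g x ^ 2 * (2 ^ (4 * n) * ‖x‖ ^ (4 * n)) := by rw [mul_comm _ (ε ^ _)]; gcongr
    _ = 2 ^ (4 * n) * (|g x| * ‖x‖ ^ (2 * n)) ^ 2 := by
      rw [mul_pow, sq_abs, ← pow_mul]; ring_nf
    _ ≤ 2 ^ (4 * n) * (Fintype.card ι ^ n * B) ^ 2 := by gcongr
    _ = Fintype.card ι ^ (2 * n) * 2 ^ (4 * n) * B ^ 2 := by ring

end EuclideanSpace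

theorem stmt_16_general (d p : ℕ) (hdp : d < 2 * p) :
    ∃ C : ℝ, 0 < C ∧ ∀ g : EuclideanSpace ℝ (Fin d) → ℝ, Measurable g →
      ∀ B : ℝ, (∀ j : Fin d, ∀ x : EuclideanSpace ℝ (Fin d),
          |x j ^ (2 * p) * g x| ≤ B) →
        ∀ ε : ℝ, ε ∈ Set.Ioc (0 : ℝ) 1 →
          ∫ x in {x : EuclideanSpace ℝ (Fin d) | ε ≤ ‖x‖}, g x ^ 2 ≤
            C * B ^ 2 * ε ^ (-(8 * (p : ℝ))) := by
  have hw : Integrable fun x : EuclideanSpace ℝ (Fin d) ↦ ((1 + ‖x‖) ^ (4 * p))⁻¹ :=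
    integrable_inv_one_add_norm_pow (by rw [finrank_euclideanSpace_fin]; omega)
  set I := ∫ x : EuclideanSpace ℝ (Fin d), ((1 + ‖x‖) ^ (4 * p))⁻¹
  have hI : 0 ≤ I := integral_nonneg fun x ↦ by positivity
  refine ⟨d ^ (2 * p) * 2 ^ (4 * p) * I + 1, by positivity, fun g _ B hB ε ⟨hε0, hε1⟩ ↦ ?_⟩
  have hε : ε ^ (-(8 * (p : ℝ))) = (ε ^ (8 * p))⁻¹ := by
    rw [Real.rpow_neg hε0.le, ← Real.rpow_natCast]; push_cast; rfl
  have hBε : 0 ≤ B ^ 2 * (ε ^ (8 * p))⁻¹ := by positivity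
  calc ∫ x in {x | ε ≤ ‖x‖}, g x ^ 2
      ≤ d ^ (2 * p) * 2 ^ (4 * p) * B ^ 2 / ε ^ (8 * p) * I := by
        refine setIntegral_le_mul_integral_of_le (measurableSet_le measurable_const
          measurable_norm) (fun x ↦ sq_nonneg _) hw (fun x ↦ by positivity) (by positivity)
          fun x hx ↦ ?_
        simpa only [Fintype.card_fin] using
          EuclideanSpace.sq_le_mul_inv_one_add_norm_pow hB hε0 hε1 hx
    _ ≤ (d ^ (2 * p) * 2 ^ (4 * p) * I + 1) * B ^ 2 * ε ^ (-(8 * (p : ℝ))) := by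
        rw [hε, div_eq_mul_inv]; linarith

/-- localization estimate.  If |x_j^(2p) g(x)| ≤ B for every
coordinate j and 2p > d, then ∫_{‖x‖ ≥ ε} g² ≤ C B² ε^(−8p) for a constant C
depending only on d and p. -/
theorem stmt_16 (d p : ℕ) (hp : 1 ≤ p) (hdp : d < 2 * p) :
    ∃ C : ℝ, 0 < C ∧ ∀ g : EuclideanSpace ℝ (Fin d) → ℝ, Measurable g →
      ∀ B : ℝ, (∀ j : Fin d, ∀ x : EuclideanSpace ℝ (Fin d),
          |x j ^ (2 * p) * g x| ≤ B) →
        ∀ ε : ℝ, ε ∈ Set.Ioc (0 : ℝ) 1 →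
          ∫ x in {x : EuclideanSpace ℝ (Fin d) | ε ≤ ‖x‖}, g x ^ 2 ≤
            C * B ^ 2 * ε ^ (-(8 * (p : ℝ))) :=
  stmt_16_general d p hdp
end

section
/- Let P : ℝ^d → [1, ∞) be a smooth function, γ ≥ 1, λ > 0, and n ∈ ℕ*. Suppose there exist constants M_1, …, M_n such that |∂^m/∂x₁^m P(x)^γ| ≤ M_m P(x)^(γ − m/(2s)) for all x and 1 ≤ m ≤ n, where s > 0 satisfies 2sγ ≤ n < 4sγ. Then there exists a constant N_n (independent of λ) such that |∂^n/∂x₁^n (1/(1 + λ P(x)^γ))| ≤ λ N_n / (1 + λ P(x)^γ) for all x ∈ ℝ^d and all λ ∈ (0,1]. -/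
lemma aux_ideriv_const (m : ℕ) (c : ℝ) : iteratedDeriv (m + 1) (fun _ : ℝ => c) = fun _ => 0 := by
  induction m generalizing c with
  | zero => funext x; simp [iteratedDeriv_succ]
  | succ m ih =>
    rw [iteratedDeriv_succ']
    have h : deriv (fun _ : ℝ => c) = fun _ : ℝ => (0 : ℝ) := funext fun t => deriv_const t c
    rw [h]
    exact ih 0

lemma aux_ideriv_mul_left (lam : ℝ) (f : ℝ → ℝ) (hf : ContDiff ℝ (⊤ : ℕ∞) f) (k : ℕ) (x : ℝ) :
    iteratedDeriv k (fun t => lam * f t) x = lam * iteratedDeriv k f x := by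
  rw [← iteratedDerivWithin_univ, ← iteratedDerivWithin_univ]
  exact iteratedDerivWithin_const_mul (Set.mem_univ x) uniqueDiffOn_univ lam
    (hf.contDiffAt.contDiffWithinAt.of_le (by exact_mod_cast le_top))

lemma aux_ideriv_one_add_mul (lam : ℝ) (f : ℝ → ℝ) (hf : ContDiff ℝ (⊤ : ℕ∞) f) (k : ℕ)
    (x : ℝ) :
    iteratedDeriv (k + 1) (fun t => 1 + lam * f t) x = lam * iteratedDeriv (k + 1) f x := by
  rw [iteratedDeriv_succ', iteratedDeriv_succ']
  have h1 : deriv (fun t => 1 + lam * f t) = fun t => lam * deriv f t := by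
    funext t
    rw [deriv_const_add]
    exact deriv_const_mul lam ((hf.differentiable (by simp)) t)
  rw [h1]
  exact aux_ideriv_mul_left lam (deriv f) (contDiff_infty_iff_deriv.mp hf).2 k x

lemma aux_ideriv_add (m : ℕ) : ∀ (f g : ℝ → ℝ), ContDiff ℝ (⊤ : ℕ∞) f → ContDiff ℝ (⊤ : ℕ∞) g →
    iteratedDeriv m (fun t => f t + g t) = fun x => iteratedDeriv m f x + iteratedDeriv m g x := by
  induction m with
  | zero => intro f g _ _; funext x; simp
  | succ m ih =>
    intro f g hf hg
    rw [iteratedDeriv_succ', iteratedDeriv_succ', iteratedDeriv_succ']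
    have h1 : deriv (fun t => f t + g t) = fun t => deriv f t + deriv g t := by
      funext t
      exact deriv_fun_add ((hf.differentiable (by simp)) t)
        ((hg.differentiable (by simp)) t)
    rw [h1]
    exact ih _ _ (contDiff_infty_iff_deriv.mp hf).2 (contDiff_infty_iff_deriv.mp hg).2

lemma aux_leibniz (m : ℕ) : ∀ (f g : ℝ → ℝ), ContDiff ℝ (⊤ : ℕ∞) f → ContDiff ℝ (⊤ : ℕ∞) g →
    ∀ x : ℝ, iteratedDeriv m (fun t => f t * g t) x =
      ∑ j ∈ Finset.range (m + 1),
        (m.choose j : ℝ) * (iteratedDeriv j f x * iteratedDeriv (m - j) g x) := by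
  induction m with
  | zero => intro f g _ _ x; simp
  | succ m ih =>
    intro f g hf hg x
    have hf' : ContDiff ℝ (⊤ : ℕ∞) (deriv f) := (contDiff_infty_iff_deriv.mp hf).2
    have hg' : ContDiff ℝ (⊤ : ℕ∞) (deriv g) := (contDiff_infty_iff_deriv.mp hg).2
    rw [iteratedDeriv_succ']
    have h1 : deriv (fun t => f t * g t) = fun t => deriv f t * g t + f t * deriv g t := by
      funext t
      exact deriv_fun_mul ((hf.differentiable (by simp)) t)
        ((hg.differentiable (by simp)) t)
    rw [h1, aux_ideriv_add m _ _ (hf'.mul hg) (hf.mul hg')]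
    beta_reduce
    rw [ih _ _ hf' hg x, ih _ _ hf hg' x,
      Finset.sum_choose_succ_mul (fun i j => iteratedDeriv i f x * iteratedDeriv j g x) m]
    rw [add_comm]
    congr 1
    · refine Finset.sum_congr rfl fun j hj => ?_
      have hj' : j ≤ m := Finset.mem_range_succ_iff.mp hj
      rw [← iteratedDeriv_succ']
      congr 3
      omega
    · refine Finset.sum_congr rfl fun j hj => ?_
      rw [← iteratedDeriv_succ']

set_option maxHeartbeats 1600000 in
/-- a Faà di Bruno type bound.  If the partial derivatives in the
first coordinate of P^γ satisfy |∂^m P^γ| ≤ M_m P^(γ − m/(2s)) for 1 ≤ m ≤ n,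
with 2sγ ≤ n < 4sγ, then |∂^n (1/(1 + λP^γ))| ≤ λ N_n/(1 + λP^γ) for all
λ ∈ (0,1], with N_n independent of λ.  The m-th partial derivative in the
first coordinate at x is expressed as the m-th derivative of
`t ↦ · (x + t • e₁)` at `t = 0`. -/
theorem stmt_19 {d : ℕ} (hd : 0 < d) (P : (Fin d → ℝ) → ℝ)
    (hPsmooth : ContDiff ℝ (⊤ : ℕ∞) P) (hP1 : ∀ x, 1 ≤ P x)
    (γ s : ℝ) (hγ : 1 ≤ γ) (hs : 0 < s)
    (n : ℕ) (hn : 1 ≤ n) (hn1 : 2 * s * γ ≤ (n : ℝ)) (hn2 : (n : ℝ) < 4 * s * γ)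
    (M : ℕ → ℝ)
    (hM : ∀ m : ℕ, 1 ≤ m → m ≤ n → ∀ x : Fin d → ℝ,
      |iteratedDeriv m
          (fun t : ℝ => P (x + t • (Pi.single (⟨0, hd⟩ : Fin d) (1 : ℝ) : Fin d → ℝ)) ^ γ)
          0| ≤
        M m * P x ^ (γ - (m : ℝ) / (2 * s))) :
    ∃ N : ℝ, ∀ lam : ℝ, lam ∈ Set.Ioc (0 : ℝ) 1 → ∀ x : Fin d → ℝ,
      |iteratedDeriv n
          (fun t : ℝ =>
            (1 + lam * P (x + t • (Pi.single (⟨0, hd⟩ : Fin d) (1 : ℝ) : Fin d → ℝ)) ^ γ)⁻¹)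
          0| ≤
        lam * N / (1 + lam * P x ^ γ) := by
  set e : Fin d → ℝ := (Pi.single (⟨0, hd⟩ : Fin d) (1 : ℝ) : Fin d → ℝ) with he
  have hPpos : ∀ y, 0 < P y := fun y => lt_of_lt_of_le one_pos (hP1 y)
  have hγ0 : (0 : ℝ) ≤ γ := le_trans zero_le_one hγ
  have hQ1 : ∀ y, (1 : ℝ) ≤ P y ^ γ := fun y => Real.one_le_rpow (hP1 y) hγ0
  have hx0 : ∀ x : Fin d → ℝ, x + (0 : ℝ) • e = x := fun x => by simp
  have hφsmooth : ∀ x : Fin d → ℝ, ContDiff ℝ (⊤ : ℕ∞) (fun t : ℝ => P (x + t • e) ^ γ) := by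
    intro x
    have hline : ContDiff ℝ (⊤ : ℕ∞) (fun t : ℝ => x + t • e) :=
      contDiff_const.add (contDiff_id.smul contDiff_const)
    have hcomp : ContDiff ℝ (⊤ : ℕ∞) (fun t : ℝ => P (x + t • e)) :=
      (hPsmooth.of_le (by simp)).comp hline
    exact hcomp.rpow contDiff_const (fun t => (hPpos _).ne')
  have hApos : ∀ (lam : ℝ), 0 < lam → ∀ (x : Fin d → ℝ) (t : ℝ),
      0 < 1 + lam * P (x + t • e) ^ γ := by
    intro lam hlam x t
    have := hQ1 (x + t • e)
    nlinarith
  have husmooth : ∀ (lam : ℝ), 0 < lam → ∀ x : Fin d → ℝ,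
      ContDiff ℝ (⊤ : ℕ∞) (fun t : ℝ => (1 + lam * P (x + t • e) ^ γ)⁻¹) := by
    intro lam hlam x
    exact (contDiff_const.add (contDiff_const.mul (hφsmooth x))).inv
      (fun t => (hApos lam hlam x t).ne')
  -- the Leibniz-based recursion identity
  have hident : ∀ (q : ℕ), 1 ≤ q → ∀ (lam : ℝ), 0 < lam → ∀ x : Fin d → ℝ,
      (1 + lam * P x ^ γ) *
          iteratedDeriv q (fun t : ℝ => (1 + lam * P (x + t • e) ^ γ)⁻¹) 0 =
        -∑ i ∈ Finset.range q, ((q.choose (i + 1) : ℝ) *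
            (lam * iteratedDeriv (i + 1) (fun t : ℝ => P (x + t • e) ^ γ) 0 *
              iteratedDeriv (q - (i + 1)) (fun t : ℝ => (1 + lam * P (x + t • e) ^ γ)⁻¹) 0)) := by
    intro q hq lam hlam x
    obtain ⟨m, rfl⟩ : ∃ m, q = m + 1 := ⟨q - 1, by omega⟩
    set F : ℝ → ℝ := fun t => 1 + lam * P (x + t • e) ^ γ with hF
    set u : ℝ → ℝ := fun t => (F t)⁻¹ with hu
    have hFsmooth : ContDiff ℝ (⊤ : ℕ∞) F := contDiff_const.add (contDiff_const.mul (hφsmooth x))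
    have husm : ContDiff ℝ (⊤ : ℕ∞) u := husmooth lam hlam x
    have hone : (fun t => F t * u t) = fun _ : ℝ => (1 : ℝ) :=
      funext fun t => mul_inv_cancel₀ (hApos lam hlam x t).ne'
    have h0 : iteratedDeriv (m + 1) (fun t => F t * u t) 0 = 0 := by
      rw [hone, aux_ideriv_const]
    rw [aux_leibniz (m + 1) F u hFsmooth husm 0] at h0
    rw [Finset.sum_range_succ'] at h0
    simp only [Nat.choose_zero_right, Nat.cast_one, one_mul, iteratedDeriv_zero, Nat.sub_zero]
      at h0
    have hF0 : F 0 = 1 + lam * P x ^ γ := by rw [hF]; simp [hx0 x]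
    have hFd : ∀ i, iteratedDeriv (i + 1) F 0 =
        lam * iteratedDeriv (i + 1) (fun t : ℝ => P (x + t • e) ^ γ) 0 := fun i =>
      aux_ideriv_one_add_mul lam _ (hφsmooth x) i 0
    have hsum : ∑ i ∈ Finset.range (m + 1), ((m + 1).choose (i + 1) : ℝ) *
          (iteratedDeriv (i + 1) F 0 * iteratedDeriv (m + 1 - (i + 1)) u 0) =
        ∑ i ∈ Finset.range (m + 1), ((m + 1).choose (i + 1) : ℝ) *
          (lam * iteratedDeriv (i + 1) (fun t : ℝ => P (x + t • e) ^ γ) 0 *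
            iteratedDeriv (m + 1 - (i + 1)) u 0) := by
      refine Finset.sum_congr rfl fun i _ => ?_
      rw [hFd i, mul_assoc]
    rw [hF0] at h0
    rw [← hsum]
    linarith [h0]
  -- constant K dominating the M j
  set K : ℝ := 1 + ∑ j ∈ Finset.range (n + 1), |M j| with hK
  have hK1 : (1 : ℝ) ≤ K := by
    have h := Finset.sum_nonneg (fun j (_ : j ∈ Finset.range (n + 1)) => abs_nonneg (M j))
    rw [hK]; linarith
  have hMK : ∀ j, 1 ≤ j → j ≤ n → M j ≤ K := by
    intro j hj1 hj2
    have h1 : |M j| ≤ ∑ i ∈ Finset.range (n + 1), |M i| :=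
      Finset.single_le_sum (fun i _ => abs_nonneg (M i)) (Finset.mem_range.mpr (by omega))
    have h2 : M j ≤ |M j| := le_abs_self _
    rw [hK]; linarith
  have hφbound : ∀ j, 1 ≤ j → j ≤ n → ∀ x : Fin d → ℝ,
      |iteratedDeriv j (fun t : ℝ => P (x + t • e) ^ γ) 0| ≤
        K * P x ^ (γ - (j : ℝ) / (2 * s)) := by
    intro j hj1 hj2 x
    refine le_trans (hM j hj1 hj2 x) ?_
    have hp : (0 : ℝ) < P x ^ (γ - (j : ℝ) / (2 * s)) := Real.rpow_pos_of_pos (hPpos x) _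
    exact mul_le_mul_of_nonneg_right (hMK j hj1 hj2) hp.le
  have key : ∀ m : ℕ, m ≤ n → ∃ D : ℝ, 1 ≤ D ∧ ∀ j, 1 ≤ j → j ≤ m →
      ∀ lam : ℝ, lam ∈ Set.Ioc (0 : ℝ) 1 → ∀ x : Fin d → ℝ,
      |iteratedDeriv j (fun t : ℝ => (1 + lam * P (x + t • e) ^ γ)⁻¹) 0| ≤
        D * (lam * P x ^ (γ - (j : ℝ) / (2 * s)) / (1 + lam * P x ^ γ) ^ 2) := by
    intro m
    induction m with
    | zero => exact fun _ => ⟨1, le_refl 1, fun j hj1 hj2 => by omega⟩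
    | succ m ih =>
      intro hmn
      obtain ⟨D, hD1, hDb⟩ := ih (by omega)
      have h2m : (1 : ℝ) ≤ 2 ^ (m + 1) := one_le_pow₀ (by norm_num)
      have hKD1 : (1 : ℝ) ≤ K * D := by nlinarith
      have hall1 : (1 : ℝ) ≤ 2 ^ (m + 1) * K * D := by nlinarith
      refine ⟨2 ^ (m + 1) * K * D, hall1, ?_⟩
      intro j hj1 hj2 lam hlam x
      have hlam0 : 0 < lam := hlam.1
      have hlam1 : lam ≤ 1 := hlam.2
      have hA1 : (1 : ℝ) ≤ 1 + lam * P x ^ γ := by nlinarith [hQ1 x]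
      have hApos0 : (0 : ℝ) < 1 + lam * P x ^ γ := lt_of_lt_of_le one_pos hA1
      by_cases hjm : j ≤ m
      · refine le_trans (hDb j hj1 hjm lam hlam x) ?_
        have hfac : (0 : ℝ) ≤ lam * P x ^ (γ - (j : ℝ) / (2 * s)) /
            (1 + lam * P x ^ γ) ^ 2 := by
          have := Real.rpow_pos_of_pos (hPpos x) (γ - (j : ℝ) / (2 * s))
          positivity
        have hDle : D ≤ 2 ^ (m + 1) * K * D := by nlinarith
        refine mul_le_mul_of_nonneg_right hDle hfac
      · have hj : j = m + 1 := by omega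
        subst hj
        have hid := hident (m + 1) (by omega) lam hlam0 x
        have hEpos : (0 : ℝ) < P x ^ (γ - ((m + 1 : ℕ) : ℝ) / (2 * s)) :=
          Real.rpow_pos_of_pos (hPpos x) _
        have hterm : ∀ i ∈ Finset.range (m + 1),
            |((m + 1).choose (i + 1) : ℝ) *
              (lam * iteratedDeriv (i + 1) (fun t : ℝ => P (x + t • e) ^ γ) 0 *
                iteratedDeriv (m + 1 - (i + 1)) (fun t : ℝ => (1 + lam * P (x + t • e) ^ γ)⁻¹) 0)| ≤
            ((m + 1).choose (i + 1) : ℝ) *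
              (K * D * (lam * P x ^ (γ - ((m + 1 : ℕ) : ℝ) / (2 * s)) / (1 + lam * P x ^ γ))) := by
          intro i hi
          have him : i ≤ m := by have := Finset.mem_range.mp hi; omega
          have haφ := hφbound (i + 1) (by omega) (by omega) x
          rw [abs_mul, abs_mul, abs_mul, abs_of_nonneg (Nat.cast_nonneg _), abs_of_pos hlam0]
          refine mul_le_mul_of_nonneg_left ?_ (Nat.cast_nonneg _)
          by_cases him' : i = m
          · subst him'
            rw [show i + 1 - (i + 1) = 0 from by omega, iteratedDeriv_zero]
            simp only [zero_smul, add_zero]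
            rw [abs_of_pos (inv_pos.mpr hApos0)]
            have hK0 : (0 : ℝ) ≤ K := by linarith
            calc lam * |iteratedDeriv (i + 1) (fun t : ℝ => P (x + t • e) ^ γ) 0| *
                  (1 + lam * P x ^ γ)⁻¹ ≤
                lam * (K * P x ^ (γ - ((i + 1 : ℕ) : ℝ) / (2 * s))) *
                  (1 + lam * P x ^ γ)⁻¹ := by
                  refine mul_le_mul_of_nonneg_right
                    (mul_le_mul_of_nonneg_left haφ hlam0.le) (by positivity)
              _ = K * 1 * (lam * P x ^ (γ - ((i + 1 : ℕ) : ℝ) / (2 * s)) /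
                  (1 + lam * P x ^ γ)) := by ring
              _ ≤ K * D * (lam * P x ^ (γ - ((i + 1 : ℕ) : ℝ) / (2 * s)) /
                  (1 + lam * P x ^ γ)) := by
                  have hpos2 : (0 : ℝ) ≤ lam * P x ^ (γ - ((i + 1 : ℕ) : ℝ) / (2 * s)) /
                      (1 + lam * P x ^ γ) := by positivity
                  exact mul_le_mul_of_nonneg_right
                    (mul_le_mul_of_nonneg_left hD1 hK0) hpos2
          · have hr1 : 1 ≤ m + 1 - (i + 1) := by omega
            have hr2 : m + 1 - (i + 1) ≤ m := by omega
            have hub := hDb (m + 1 - (i + 1)) hr1 hr2 lam hlam x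
            have hsplit : P x ^ (γ - ((i + 1 : ℕ) : ℝ) / (2 * s)) *
                P x ^ (γ - ((m + 1 - (i + 1) : ℕ) : ℝ) / (2 * s)) =
                P x ^ γ * P x ^ (γ - ((m + 1 : ℕ) : ℝ) / (2 * s)) := by
              rw [← Real.rpow_add (hPpos x), ← Real.rpow_add (hPpos x)]
              congr 1
              have hc : ((m + 1 - (i + 1) : ℕ) : ℝ) = (m : ℝ) - (i : ℝ) := by
                have : (m + 1 - (i + 1) : ℕ) = m - i := by omega
                rw [this, Nat.cast_sub him]
              rw [hc]
              push_cast
              field_simp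
              ring
            have hupos : (0 : ℝ) < P x ^ (γ - ((i + 1 : ℕ) : ℝ) / (2 * s)) :=
              Real.rpow_pos_of_pos (hPpos x) _
            have hu2pos : (0 : ℝ) < P x ^ (γ - ((m + 1 - (i + 1) : ℕ) : ℝ) / (2 * s)) :=
              Real.rpow_pos_of_pos (hPpos x) _
            calc lam * |iteratedDeriv (i + 1) (fun t : ℝ => P (x + t • e) ^ γ) 0| *
                  |iteratedDeriv (m + 1 - (i + 1))
                    (fun t : ℝ => (1 + lam * P (x + t • e) ^ γ)⁻¹) 0| ≤
                lam * (K * P x ^ (γ - ((i + 1 : ℕ) : ℝ) / (2 * s))) *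
                  (D * (lam * P x ^ (γ - ((m + 1 - (i + 1) : ℕ) : ℝ) / (2 * s)) /
                    (1 + lam * P x ^ γ) ^ 2)) := by
                  refine mul_le_mul (mul_le_mul_of_nonneg_left haφ hlam0.le) hub
                    (abs_nonneg _) (by positivity)
              _ = K * D * lam * lam * (P x ^ (γ - ((i + 1 : ℕ) : ℝ) / (2 * s)) *
                  P x ^ (γ - ((m + 1 - (i + 1) : ℕ) : ℝ) / (2 * s))) /
                  (1 + lam * P x ^ γ) ^ 2 := by ring
              _ = K * D * lam * lam * (P x ^ γ *
                  P x ^ (γ - ((m + 1 : ℕ) : ℝ) / (2 * s))) /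
                  (1 + lam * P x ^ γ) ^ 2 := by rw [hsplit]
              _ = K * D * ((lam * P x ^ γ / (1 + lam * P x ^ γ)) *
                  (lam * P x ^ (γ - ((m + 1 : ℕ) : ℝ) / (2 * s)) /
                    (1 + lam * P x ^ γ))) := by
                  have hAne : (1 + lam * P x ^ γ) ≠ 0 := hApos0.ne'
                  field_simp
              _ ≤ K * D * (1 * (lam * P x ^ (γ - ((m + 1 : ℕ) : ℝ) / (2 * s)) /
                  (1 + lam * P x ^ γ))) := by
                  have hle1 : lam * P x ^ γ / (1 + lam * P x ^ γ) ≤ 1 := by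
                    rw [div_le_one hApos0]; linarith
                  have hKD : (0 : ℝ) ≤ K * D := by nlinarith
                  refine mul_le_mul_of_nonneg_left
                    (mul_le_mul_of_nonneg_right hle1 (by positivity)) hKD
              _ = K * D * (lam * P x ^ (γ - ((m + 1 : ℕ) : ℝ) / (2 * s)) /
                  (1 + lam * P x ^ γ)) := by ring
        have hchoose : ∑ i ∈ Finset.range (m + 1), (((m + 1).choose (i + 1) : ℕ) : ℝ) ≤
            2 ^ (m + 1) := by
          have h := Nat.sum_range_choose (m + 1)
          have h2 : ∑ i ∈ Finset.range (m + 2), (((m + 1).choose i : ℕ) : ℝ) =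
              2 ^ (m + 1) := by exact_mod_cast congrArg (Nat.cast : ℕ → ℝ) h
          rw [Finset.sum_range_succ'] at h2
          simp only [Nat.choose_zero_right, Nat.cast_one] at h2
          linarith
        have hidS : iteratedDeriv (m + 1) (fun t : ℝ => (1 + lam * P (x + t • e) ^ γ)⁻¹) 0 =
            (-∑ i ∈ Finset.range (m + 1), (((m + 1).choose (i + 1) : ℕ) : ℝ) *
              (lam * iteratedDeriv (i + 1) (fun t : ℝ => P (x + t • e) ^ γ) 0 *
                iteratedDeriv (m + 1 - (i + 1))
                  (fun t : ℝ => (1 + lam * P (x + t • e) ^ γ)⁻¹) 0)) /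
            (1 + lam * P x ^ γ) := by
          rw [eq_div_iff hApos0.ne', mul_comm]
          exact hid
        have hSb : |∑ i ∈ Finset.range (m + 1), (((m + 1).choose (i + 1) : ℕ) : ℝ) *
            (lam * iteratedDeriv (i + 1) (fun t : ℝ => P (x + t • e) ^ γ) 0 *
              iteratedDeriv (m + 1 - (i + 1))
                (fun t : ℝ => (1 + lam * P (x + t • e) ^ γ)⁻¹) 0)| ≤
            2 ^ (m + 1) * (K * D * (lam * P x ^ (γ - ((m + 1 : ℕ) : ℝ) / (2 * s)) /
            (1 + lam * P x ^ γ))) := by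
          have hKD0 : (0 : ℝ) ≤ K * D := by nlinarith
          calc |∑ i ∈ Finset.range (m + 1), (((m + 1).choose (i + 1) : ℕ) : ℝ) *
              (lam * iteratedDeriv (i + 1) (fun t : ℝ => P (x + t • e) ^ γ) 0 *
                iteratedDeriv (m + 1 - (i + 1))
                  (fun t : ℝ => (1 + lam * P (x + t • e) ^ γ)⁻¹) 0)| ≤
              ∑ i ∈ Finset.range (m + 1),
              |(((m + 1).choose (i + 1) : ℕ) : ℝ) *
                (lam * iteratedDeriv (i + 1) (fun t : ℝ => P (x + t • e) ^ γ) 0 *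
                  iteratedDeriv (m + 1 - (i + 1))
                    (fun t : ℝ => (1 + lam * P (x + t • e) ^ γ)⁻¹) 0)| :=
              Finset.abs_sum_le_sum_abs _ _
            _ ≤ ∑ i ∈ Finset.range (m + 1), (((m + 1).choose (i + 1) : ℕ) : ℝ) *
                (K * D * (lam * P x ^ (γ - ((m + 1 : ℕ) : ℝ) / (2 * s)) /
                  (1 + lam * P x ^ γ))) := Finset.sum_le_sum hterm
            _ = (∑ i ∈ Finset.range (m + 1), (((m + 1).choose (i + 1) : ℕ) : ℝ)) *
                (K * D * (lam * P x ^ (γ - ((m + 1 : ℕ) : ℝ) / (2 * s)) /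
                  (1 + lam * P x ^ γ))) := by rw [← Finset.sum_mul]
            _ ≤ 2 ^ (m + 1) * (K * D * (lam * P x ^ (γ - ((m + 1 : ℕ) : ℝ) / (2 * s)) /
                (1 + lam * P x ^ γ))) := by
                refine mul_le_mul_of_nonneg_right hchoose (by positivity)
        rw [hidS, abs_div, abs_of_pos hApos0, abs_neg]
        calc (|∑ i ∈ Finset.range (m + 1), (((m + 1).choose (i + 1) : ℕ) : ℝ) *
              (lam * iteratedDeriv (i + 1) (fun t : ℝ => P (x + t • e) ^ γ) 0 *
                iteratedDeriv (m + 1 - (i + 1))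
                  (fun t : ℝ => (1 + lam * P (x + t • e) ^ γ)⁻¹) 0)|) /
              (1 + lam * P x ^ γ) ≤
            (2 ^ (m + 1) * (K * D * (lam * P x ^ (γ - ((m + 1 : ℕ) : ℝ) / (2 * s)) /
              (1 + lam * P x ^ γ)))) / (1 + lam * P x ^ γ) :=
              div_le_div_of_nonneg_right hSb hApos0.le
          _ = 2 ^ (m + 1) * K * D * (lam * P x ^ (γ - ((m + 1 : ℕ) : ℝ) / (2 * s)) /
              (1 + lam * P x ^ γ) ^ 2) := by
              have hAne : (1 + lam * P x ^ γ) ≠ 0 := hApos0.ne'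
              field_simp
  obtain ⟨D, hD1, hDb⟩ := key n le_rfl
  refine ⟨D, fun lam hlam x => ?_⟩
  have hlam0 : 0 < lam := hlam.1
  have hA1 : (1 : ℝ) ≤ 1 + lam * P x ^ γ := by nlinarith [hQ1 x]
  have hApos0 : (0 : ℝ) < 1 + lam * P x ^ γ := lt_of_lt_of_le one_pos hA1
  have hb := hDb n hn le_rfl lam hlam x
  have hE : P x ^ (γ - (n : ℝ) / (2 * s)) ≤ 1 := by
    refine Real.rpow_le_one_of_one_le_of_nonpos (hP1 x) ?_
    have h2s : (0 : ℝ) < 2 * s := by linarith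
    have : γ ≤ (n : ℝ) / (2 * s) := (le_div_iff₀ h2s).mpr (by nlinarith)
    linarith
  have hEpos : (0 : ℝ) < P x ^ (γ - (n : ℝ) / (2 * s)) := Real.rpow_pos_of_pos (hPpos x) _
  have hfin : D * (lam * P x ^ (γ - (n : ℝ) / (2 * s)) / (1 + lam * P x ^ γ) ^ 2) ≤
      lam * D / (1 + lam * P x ^ γ) := by
    have hnum : lam * P x ^ (γ - (n : ℝ) / (2 * s)) ≤ lam := by nlinarith
    have hden : (1 + lam * P x ^ γ) ≤ (1 + lam * P x ^ γ) ^ 2 := by nlinarith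
    have hdd : lam * P x ^ (γ - (n : ℝ) / (2 * s)) / (1 + lam * P x ^ γ) ^ 2 ≤
        lam / (1 + lam * P x ^ γ) := div_le_div₀ hlam0.le hnum hApos0 hden
    calc D * (lam * P x ^ (γ - (n : ℝ) / (2 * s)) / (1 + lam * P x ^ γ) ^ 2) ≤
        D * (lam / (1 + lam * P x ^ γ)) := mul_le_mul_of_nonneg_left hdd (by linarith)
      _ = lam * D / (1 + lam * P x ^ γ) := by ring
  exact le_trans hb hfin
end
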